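/- Let T be a tree. For a function f on the vertex set of T, the following are equivalent: f is convex on T; f is alternating L-convex on T; f is midpoint L-extendable on T. Moreover, for convex functions f, g on T and α, β ∈ ℝ with α, β ≥ 0, the function αf + βg is convex on T, and the function u ↦ max{f(u), g(u)} is convex on T. -/
import Mathlib


open SimpleGraph

/-- A tree `T` regarded as a bipartite graph with black class `B` and white class `W`,
together with the discrete midpoint operations `bull` (`•`) and `circ` (`∘`) characterized
by: `{u • v, u ∘ v} = {a, b}` where `(a,b)` is the unique pair with
`d(u,v) = d(u,a) + d(a,b) + d(b,v)`, `d(u,a) = d(b,v)`, `d(a,b) ≤ 1`, and `u ∘ v ⪯ u • v`. -/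
structure AltTree (V : Type*) where
  T : SimpleGraph V
  tree : T.IsTree
  B : Set V
  W : Set V
  color_disjoint : Disjoint B W
  color_cover : B ∪ W = Set.univ
  adj_colors : ∀ ⦃u v : V⦄, T.Adj u v → (u ∈ B ∧ v ∈ W) ∨ (u ∈ W ∧ v ∈ B)
  bull : V → V → V
  circ : V → V → V
  mid_spec : ∀ u v : V,
      (T.dist u v = T.dist u (bull u v) + T.dist (bull u v) (circ u v) + T.dist (circ u v) v
        ∧ T.dist u (bull u v) = T.dist (circ u v) v)
    ∨ (T.dist u v = T.dist u (circ u v) + T.dist (circ u v) (bull u v) + T.dist (bull u v) v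
        ∧ T.dist u (circ u v) = T.dist (bull u v) v)
  mid_close : ∀ u v : V, T.dist (bull u v) (circ u v) ≤ 1
  circ_le_bull : ∀ u v : V, circ u v = bull u v ∨
      (T.Adj (circ u v) (bull u v) ∧ circ u v ∈ W ∧ bull u v ∈ B)

namespace AltTree

variable {V : Type*} {n : ℕ}

/-- The alternating partial order `u ⪯ v` on the vertices of `T`:
`u ⪯ v` iff `u = v` or `u` and `v` are adjacent with `u` white and `v` black. -/
def le (A : AltTree V) (u v : V) : Prop :=
  u = v ∨ (A.T.Adj u v ∧ u ∈ A.W ∧ v ∈ A.B)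

/-- The componentwise partial order on `T^n`.  `A.leP y x` means `y ∈ I(x)`,
and `A.leP x y` means `y ∈ F(x)`. -/
def leP (A : AltTree V) (x y : Fin n → V) : Prop := ∀ i, A.le (x i) (y i)

/-- The `l∞`-metric on `T^n`. -/
noncomputable def distP (A : AltTree V) (x y : Fin n → V) : ℕ :=
  Finset.univ.sup fun i => A.T.dist (x i) (y i)

/-- Componentwise `•` on `T^n`. -/
def bullP (A : AltTree V) (x y : Fin n → V) : Fin n → V := fun i => A.bull (x i) (y i)

/-- Componentwise `∘` on `T^n`. -/
def circP (A : AltTree V) (x y : Fin n → V) : Fin n → V := fun i => A.circ (x i) (y i)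

/-- Alternating L-convexity: `g(x) + g(y) ≥ g(x • y) + g(x ∘ y)` for all `x, y ∈ T^n`. -/
def IsLConvex (A : AltTree V) (g : (Fin n → V) → WithTop ℝ) : Prop :=
  ∀ x y : Fin n → V, g (A.bullP x y) + g (A.circP x y) ≤ g x + g y

end AltTree

/-- `sub` (an `AltTree` on `V'`) is the edge-subdivision `T*` of the tree `baseT` on `V`,
via the embedding `ι : V → V'`: the original vertices form the black class of `T*`,
distances double, and the white vertices of `T*` are exactly the midpoints of edges. -/
structure IsSubdivision {V V' : Type*} (baseT : SimpleGraph V) (sub : AltTree V')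
    (ι : V → V') : Prop where
  inj : Function.Injective ι
  black_image : sub.B = Set.range ι
  dist_double : ∀ u v : V, sub.T.dist (ι u) (ι v) = 2 * baseT.dist u v
  white_mid : ∀ w ∈ sub.W, ∃ u v : V, baseT.Adj u v ∧ sub.T.Adj (ι u) w ∧ sub.T.Adj w (ι v)
  adj_iff : ∀ u v : V, baseT.Adj u v ↔ ∃ w ∈ sub.W, sub.T.Adj (ι u) w ∧ sub.T.Adj w (ι v)

/-- `s = [u,v]_t`: `s` is the vertex on the unique `u`–`v` path of `T` at distance `t`
from `u`. -/
def OnSeg {V : Type*} (T : SimpleGraph V) (u v s : V) (t : ℕ) : Prop :=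
  T.dist u v = T.dist u s + T.dist s v ∧ T.dist u s = t

/-- A function `f` on the vertex set of the tree `T` is convex if for all vertices
`u, v` the map `t ↦ f([u,v]_t)` on `{0, 1, …, d(u,v)}` is convex. -/
def TreeConvex {V : Type*} (T : SimpleGraph V) (f : V → ℝ) : Prop :=
  ∀ u v : V, ∀ p q r : V, ∀ t : ℕ, t + 2 ≤ T.dist u v →
    OnSeg T u v p t → OnSeg T u v q (t + 1) → OnSeg T u v r (t + 2) →
    2 * f q ≤ f p + f r

/-- Alternating L-convexity for a real-valued function of one variable on a tree. -/
def IsLConvex1 {V : Type*} (A : AltTree V) (f : V → ℝ) : Prop :=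
  ∀ u v : V, f (A.bull u v) + f (A.circ u v) ≤ f u + f v

section Aux

variable {V : Type*} {T : SimpleGraph V}

lemma aux_walk_getVert_dist (hc : T.Connected) :
    ∀ {u v : V} (w : T.Walk u v), w.length = T.dist u v → ∀ t, t ≤ w.length →
      T.dist u (w.getVert t) = t ∧ T.dist (w.getVert t) v + t = w.length := by
  intro u v w
  induction w with
  | nil =>
    intro h t ht
    simp only [Walk.length_nil] at ht ⊢
    obtain rfl : t = 0 := by omega
    simp [SimpleGraph.dist_self]
  | @cons u u' v hadj q ih =>
    intro hlen t ht
    have hd1 : T.dist u u' ≤ 1 := by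
      simpa using SimpleGraph.dist_le (Walk.cons hadj Walk.nil)
    have hq : q.length = T.dist u' v := by
      have h1 : T.dist u' v ≤ q.length := SimpleGraph.dist_le q
      have h2 : T.dist u v ≤ T.dist u u' + T.dist u' v := hc.dist_triangle
      simp only [Walk.length_cons] at hlen
      omega
    cases t with
    | zero =>
      simp only [Walk.getVert_zero]
      constructor
      · exact SimpleGraph.dist_self
      · omega
    | succ s =>
      simp only [Walk.length_cons] at hlen ht ⊢
      rw [Walk.getVert_cons_succ]
      obtain ⟨h1, h2⟩ := ih hq s (by omega)
      have hub : T.dist u (q.getVert s) ≤ T.dist u u' + T.dist u' (q.getVert s) :=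
        hc.dist_triangle
      have hlb : T.dist u v ≤ T.dist u (q.getVert s) + T.dist (q.getVert s) v :=
        hc.dist_triangle
      omega

lemma aux_exists_geodesic (hc : T.Connected) (u v : V) :
    ∃ w : T.Walk u v, w.IsPath ∧ w.length = T.dist u v := by
  obtain ⟨w, hw⟩ := hc.exists_walk_length_eq_dist u v
  exact ⟨w, w.isPath_of_length_eq_dist hw, hw⟩

lemma aux_chain (hc : T.Connected) (u v : V) :
    ∃ s : ℕ → V, s 0 = u ∧ s (T.dist u v) = v ∧
      (∀ t, t ≤ T.dist u v → OnSeg T u v (s t) t) ∧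
      (∀ t, t + 1 ≤ T.dist u v → T.Adj (s t) (s (t + 1))) := by
  obtain ⟨w, hp, hw⟩ := aux_exists_geodesic hc u v
  refine ⟨fun t => w.getVert t, w.getVert_zero, by rw [← hw]; exact w.getVert_length, ?_, ?_⟩
  · intro t ht
    obtain ⟨h1, h2⟩ := aux_walk_getVert_dist hc w hw t (by omega)
    dsimp only
    exact ⟨by omega, h1⟩
  · intro t ht
    dsimp only
    exact w.adj_getVert_succ (by omega)

lemma aux_onSeg_unique (hT : T.IsTree) {u v s s' : V} {t : ℕ}
    (hs : OnSeg T u v s t) (hs' : OnSeg T u v s' t) : s = s' := by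
  have hc := hT.isConnected
  obtain ⟨w1, hp1, hl1⟩ := aux_exists_geodesic hc u s
  obtain ⟨w2, hp2, hl2⟩ := aux_exists_geodesic hc s v
  obtain ⟨w1', hp1', hl1'⟩ := aux_exists_geodesic hc u s'
  obtain ⟨w2', hp2', hl2'⟩ := aux_exists_geodesic hc s' v
  have hw : (w1.append w2).length = T.dist u v := by
    rw [Walk.length_append]
    have := hs.1
    omega
  have hw' : (w1'.append w2').length = T.dist u v := by
    rw [Walk.length_append]
    have := hs'.1
    omega
  have hpw := (w1.append w2).isPath_of_length_eq_dist hw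
  have hpw' := (w1'.append w2').isPath_of_length_eq_dist hw'
  have heq : w1.append w2 = w1'.append w2' := by
    have h := hT.existsUnique_path u v
    exact (h.unique hpw hpw')
  have h1 : (w1.append w2).getVert t = s := by
    rw [Walk.getVert_append]
    have : w1.length = t := by rw [hl1, hs.2]
    simp [this]
  have h1' : (w1'.append w2').getVert t = s' := by
    rw [Walk.getVert_append]
    have : w1'.length = t := by rw [hl1', hs'.2]
    simp [this]
  rw [← h1, ← h1', heq]

lemma aux_triple (hT : T.IsTree) {u v p q r : V} {t : ℕ} (ht : t + 2 ≤ T.dist u v)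
    (hp : OnSeg T u v p t) (hq : OnSeg T u v q (t + 1)) (hr : OnSeg T u v r (t + 2)) :
    T.Adj p q ∧ T.Adj q r ∧ T.dist p r = 2 ∧ OnSeg T p r q 1 := by
  have hc := hT.isConnected
  obtain ⟨s, hs0, hsd, hseg, hadj⟩ := aux_chain hc u v
  have ep : p = s t := aux_onSeg_unique hT hp (hseg t (by omega))
  have eq' : q = s (t + 1) := aux_onSeg_unique hT hq (hseg (t + 1) (by omega))
  have er : r = s (t + 2) := aux_onSeg_unique hT hr (hseg (t + 2) (by omega))
  have a1 : T.Adj p q := by rw [ep, eq']; exact hadj t (by omega)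
  have a2 : T.Adj q r := by rw [eq', er]; exact hadj (t + 1) (by omega)
  have d1 : T.dist p q = 1 := SimpleGraph.dist_eq_one_iff_adj.mpr a1
  have d2 : T.dist q r = 1 := SimpleGraph.dist_eq_one_iff_adj.mpr a2
  have dpr_le : T.dist p r ≤ T.dist p q + T.dist q r := hc.dist_triangle
  have dpr_ge : T.dist u r ≤ T.dist u p + T.dist p r := hc.dist_triangle
  have h1 := hp.2
  have h2 := hr.2
  refine ⟨a1, a2, by omega, ⟨by omega, d1⟩⟩

end Aux

section Aux2

lemma aux_no_triangle {V : Type*} {T : SimpleGraph V} (hT : T.IsTree) {x y z : V}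
    (h1 : T.Adj x y) (h2 : T.Adj y z) (h3 : T.Adj x z) : False := by
  have hp1 : (Walk.cons h3 Walk.nil).IsPath := by
    simp [Walk.cons_isPath_iff, h3.ne]
  have hp2 : (Walk.cons h1 (Walk.cons h2 Walk.nil)).IsPath := by
    simp [Walk.cons_isPath_iff, h1.ne, h2.ne, h3.ne]
  have heq := (hT.existsUnique_path x z).unique hp1 hp2
  have hlen := congrArg Walk.length heq
  simp at hlen

lemma aux_no_two_mid {V : Type*} {T : SimpleGraph V} (hT : T.IsTree) {a b w1 w2 : V}
    (hne : w1 ≠ w2) (hab : a ≠ b) (h1 : T.Adj a w1) (h2 : T.Adj w1 b)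
    (h3 : T.Adj a w2) (h4 : T.Adj w2 b) : False := by
  have hp1 : (Walk.cons h1 (Walk.cons h2 Walk.nil)).IsPath := by
    simp [Walk.cons_isPath_iff, h1.ne, h2.ne, hab]
  have hp2 : (Walk.cons h3 (Walk.cons h4 Walk.nil)).IsPath := by
    simp [Walk.cons_isPath_iff, h3.ne, h4.ne, hab]
  have heq := (hT.existsUnique_path a b).unique hp1 hp2
  have hs := congrArg Walk.support heq
  simp [Walk.support_cons] at hs
  exact hne hs

lemma aux_mid_char {V : Type*} (A : AltTree V) (u v : V) :
    ∃ k e : ℕ, A.T.dist u v = 2 * k + e ∧ e ≤ 1 ∧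
      ((OnSeg A.T u v (A.bull u v) k ∧ OnSeg A.T u v (A.circ u v) (k + e)) ∨
       (OnSeg A.T u v (A.circ u v) k ∧ OnSeg A.T u v (A.bull u v) (k + e))) := by
  have hc := A.tree.isConnected
  have hclose := A.mid_close u v
  rcases A.mid_spec u v with ⟨h1, h2⟩ | ⟨h1, h2⟩
  · refine ⟨A.T.dist u (A.bull u v), A.T.dist (A.bull u v) (A.circ u v), by omega,
      hclose, Or.inl ⟨⟨?_, rfl⟩, ⟨?_, ?_⟩⟩⟩
    · have t1 : A.T.dist (A.bull u v) v ≤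
          A.T.dist (A.bull u v) (A.circ u v) + A.T.dist (A.circ u v) v := hc.dist_triangle
      have t2 : A.T.dist u v ≤ A.T.dist u (A.bull u v) + A.T.dist (A.bull u v) v :=
        hc.dist_triangle
      omega
    · have t1 : A.T.dist u (A.circ u v) ≤
          A.T.dist u (A.bull u v) + A.T.dist (A.bull u v) (A.circ u v) := hc.dist_triangle
      have t2 : A.T.dist u v ≤ A.T.dist u (A.circ u v) + A.T.dist (A.circ u v) v :=
        hc.dist_triangle
      omega
    · have t1 : A.T.dist u (A.circ u v) ≤
          A.T.dist u (A.bull u v) + A.T.dist (A.bull u v) (A.circ u v) := hc.dist_triangle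
      have t2 : A.T.dist u v ≤ A.T.dist u (A.circ u v) + A.T.dist (A.circ u v) v :=
        hc.dist_triangle
      omega
  · have hclose' : A.T.dist (A.circ u v) (A.bull u v) ≤ 1 := by
      rw [SimpleGraph.dist_comm]; exact hclose
    refine ⟨A.T.dist u (A.circ u v), A.T.dist (A.circ u v) (A.bull u v), by omega,
      hclose', Or.inr ⟨⟨?_, rfl⟩, ⟨?_, ?_⟩⟩⟩
    · have t1 : A.T.dist (A.circ u v) v ≤
          A.T.dist (A.circ u v) (A.bull u v) + A.T.dist (A.bull u v) v := hc.dist_triangle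
      have t2 : A.T.dist u v ≤ A.T.dist u (A.circ u v) + A.T.dist (A.circ u v) v :=
        hc.dist_triangle
      omega
    · have t1 : A.T.dist u (A.bull u v) ≤
          A.T.dist u (A.circ u v) + A.T.dist (A.circ u v) (A.bull u v) := hc.dist_triangle
      have t2 : A.T.dist u v ≤ A.T.dist u (A.bull u v) + A.T.dist (A.bull u v) v :=
        hc.dist_triangle
      omega
    · have t1 : A.T.dist u (A.bull u v) ≤
          A.T.dist u (A.circ u v) + A.T.dist (A.circ u v) (A.bull u v) := hc.dist_triangle
      have t2 : A.T.dist u v ≤ A.T.dist u (A.bull u v) + A.T.dist (A.bull u v) v :=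
        hc.dist_triangle
      omega

lemma aux_slope_mono (h : ℕ → ℝ) (d : ℕ)
    (hconv : ∀ k, k + 2 ≤ d → 2 * h (k + 1) ≤ h k + h (k + 2)) :
    ∀ i j, i ≤ j → j + 1 ≤ d → h (i + 1) + h j ≤ h i + h (j + 1) := by
  intro i j
  induction j with
  | zero =>
    intro hij _
    obtain rfl : i = 0 := by omega
    linarith
  | succ n ih =>
    intro hij hj
    rcases Nat.lt_or_ge i (n + 1) with hlt | hge
    · have h1 := ih (by omega) (by omega)
      have h2 := hconv n (by omega)
      linarith
    · obtain rfl : i = n + 1 := by omega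
      linarith

lemma aux_endpoint_bound (h : ℕ → ℝ) (d : ℕ)
    (hconv : ∀ k, k + 2 ≤ d → 2 * h (k + 1) ≤ h k + h (k + 2)) :
    ∀ t, 2 * t ≤ d → h t + h (d - t) ≤ h 0 + h d := by
  intro t
  induction t with
  | zero => intro _; simp
  | succ n ih =>
    intro h2t
    have key := aux_slope_mono h d hconv n (d - n - 1) (by omega) (by omega)
    have e1 : d - n - 1 + 1 = d - n := by omega
    rw [e1] at key
    have e2 : d - (n + 1) = d - n - 1 := by omega
    rw [e2]
    have := ih (by omega)
    linarith

lemma aux_conv_iff_lconv {V : Type*} (A : AltTree V) (f : V → ℝ) :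
    TreeConvex A.T f ↔ IsLConvex1 A f := by
  constructor
  · intro hf u v
    obtain ⟨k, e, hd, he, hor⟩ := aux_mid_char A u v
    obtain ⟨s, hs0, hsd, hseg, hadj⟩ := aux_chain A.tree.isConnected u v
    have hconv : ∀ j, j + 2 ≤ A.T.dist u v →
        2 * f (s (j + 1)) ≤ f (s j) + f (s (j + 2)) := fun j hj =>
      hf u v (s j) (s (j + 1)) (s (j + 2)) j hj (hseg j (by omega))
        (hseg (j + 1) (by omega)) (hseg (j + 2) (by omega))
    have key := aux_endpoint_bound (fun t => f (s t)) (A.T.dist u v) hconv k (by omega)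
    have hdk : A.T.dist u v - k = k + e := by omega
    rw [hdk] at key
    simp only [hs0, hsd] at key
    rcases hor with ⟨hb, hc2⟩ | ⟨hc2, hb⟩
    · have e1 : A.bull u v = s k := aux_onSeg_unique A.tree hb (hseg k (by omega))
      have e2 : A.circ u v = s (k + e) := aux_onSeg_unique A.tree hc2 (hseg (k + e) (by omega))
      rw [e1, e2]
      linarith
    · have e1 : A.circ u v = s k := aux_onSeg_unique A.tree hc2 (hseg k (by omega))
      have e2 : A.bull u v = s (k + e) := aux_onSeg_unique A.tree hb (hseg (k + e) (by omega))
      rw [e1, e2]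
      linarith
  · intro hf u v p q r t ht hp hq hr
    obtain ⟨a1, a2, dpr, hq1⟩ := aux_triple A.tree ht hp hq hr
    obtain ⟨k, e, hd, he, hor⟩ := aux_mid_char A p r
    rw [dpr] at hd
    obtain rfl : k = 1 := by omega
    obtain rfl : e = 0 := by omega
    have := hf p r
    rcases hor with ⟨hb, hc2⟩ | ⟨hc2, hb⟩
    · have e1 : A.bull p r = q := aux_onSeg_unique A.tree hb hq1
      have e2 : A.circ p r = q := aux_onSeg_unique A.tree hc2 hq1
      rw [e1, e2] at this
      linarith
    · have e1 : A.circ p r = q := aux_onSeg_unique A.tree hc2 hq1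
      have e2 : A.bull p r = q := aux_onSeg_unique A.tree hb hq1
      rw [e1, e2] at this
      linarith

end Aux2




section Aux3

open Classical in
noncomputable def extFun {V V' : Type*} (ι : V → V') (A : AltTree V) (sub : AltTree V')
    (f : V → ℝ) : V' → ℝ := fun w =>
  if h : ∃ v, ι v = w then f h.choose
  else if h2 : ∃ p : V × V, A.T.Adj p.1 p.2 ∧ sub.T.Adj (ι p.1) w ∧ sub.T.Adj w (ι p.2)
    then (f h2.choose.1 + f h2.choose.2) / 2 else 0

lemma extFun_black {V V' : Type*} {ι : V → V'} (A : AltTree V) (sub : AltTree V')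
    (hinj : Function.Injective ι) (f : V → ℝ) (v : V) : extFun ι A sub f (ι v) = f v := by
  classical
  have hex : ∃ x, ι x = ι v := ⟨v, rfl⟩
  rw [extFun]
  rw [dif_pos hex]
  exact congrArg f (hinj hex.choose_spec)

lemma extFun_white {V V' : Type*} {ι : V → V'} {A : AltTree V} {sub : AltTree V'}
    (hsub : IsSubdivision A.T sub ι) (f : V → ℝ) {w : V'} (hw : w ∈ sub.W) :
    ∃ a b : V, A.T.Adj a b ∧ sub.T.Adj (ι a) w ∧ sub.T.Adj w (ι b) ∧
      extFun ι A sub f w = (f a + f b) / 2 := by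
  have hnb : ¬ ∃ v, ι v = w := by
    rintro ⟨v, rfl⟩
    have hb : ι v ∈ sub.B := hsub.black_image ▸ Set.mem_range_self v
    exact Set.disjoint_left.mp sub.color_disjoint hb hw
  obtain ⟨a, b, hab, h1, h2⟩ := hsub.white_mid w hw
  have hex : ∃ p : V × V, A.T.Adj p.1 p.2 ∧ sub.T.Adj (ι p.1) w ∧ sub.T.Adj w (ι p.2) :=
    ⟨(a, b), hab, h1, h2⟩
  refine ⟨hex.choose.1, hex.choose.2, hex.choose_spec.1, hex.choose_spec.2.1,
    hex.choose_spec.2.2, ?_⟩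
  classical
  rw [extFun]
  rw [dif_neg hnb, dif_pos hex]

lemma aux_restrict_convex {V V' : Type*} (A : AltTree V) (sub : AltTree V') (ι : V → V')
    (hsub : IsSubdivision A.T sub ι) (f : V → ℝ) (g : V' → ℝ)
    (hg : IsLConvex1 sub g) (hgf : ∀ v, g (ι v) = f v) : TreeConvex A.T f := by
  intro u v p q r t ht hp hq hr
  obtain ⟨a1, a2, dpr, hq1⟩ := aux_triple A.tree ht hp hq hr
  have d4 : sub.T.dist (ι p) (ι r) = 4 := by rw [hsub.dist_double, dpr]
  have dq1 : sub.T.dist (ι p) (ι q) = 2 := by rw [hsub.dist_double, hq1.2]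
  have dq2 : sub.T.dist (ι q) (ι r) = 2 := by
    rw [hsub.dist_double]
    have h1 := hq1.1
    have h2 := hq1.2
    omega
  have hqOn : OnSeg sub.T (ι p) (ι r) (ι q) 2 := ⟨by omega, dq1⟩
  obtain ⟨k, e, hd, he, hor⟩ := aux_mid_char sub (ι p) (ι r)
  rw [d4] at hd
  obtain rfl : k = 2 := by omega
  obtain rfl : e = 0 := by omega
  have hkey := hg (ι p) (ι r)
  rcases hor with ⟨hb, hc⟩ | ⟨hc, hb⟩
  · have e1 : sub.bull (ι p) (ι r) = ι q := aux_onSeg_unique sub.tree hb hqOn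
    have e2 : sub.circ (ι p) (ι r) = ι q := aux_onSeg_unique sub.tree hc hqOn
    rw [e1, e2, hgf, hgf, hgf] at hkey
    linarith
  · have e1 : sub.circ (ι p) (ι r) = ι q := aux_onSeg_unique sub.tree hc hqOn
    have e2 : sub.bull (ι p) (ι r) = ι q := aux_onSeg_unique sub.tree hb hqOn
    rw [e1, e2, hgf, hgf, hgf] at hkey
    linarith

lemma aux_ext_convex {V V' : Type*} (A : AltTree V) (sub : AltTree V') (ι : V → V')
    (hsub : IsSubdivision A.T sub ι) (f : V → ℝ) (hf : TreeConvex A.T f) :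
    TreeConvex sub.T (extFun ι A sub f) := by
  intro u' v' p' q' r' t ht hp hq hr
  obtain ⟨a1, a2, dpr, hq1⟩ := aux_triple sub.tree ht hp hq hr
  have hpr_ne : p' ≠ r' := by
    intro h
    rw [h] at dpr
    rw [SimpleGraph.dist_self] at dpr
    omega
  have notBW : ∀ x : V', x ∈ sub.B → x ∈ sub.W → False := fun x hb hw =>
    Set.disjoint_left.mp sub.color_disjoint hb hw
  have hcover : ∀ x : V', x ∈ sub.B ∨ x ∈ sub.W := by
    intro x
    have hx : x ∈ sub.B ∪ sub.W := by rw [sub.color_cover]; trivial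
    exact hx
  rcases hcover q' with hqB | hqW
  · -- q' is black
    have hpW : p' ∈ sub.W := by
      rcases sub.adj_colors a1 with ⟨h1, h2⟩ | ⟨h1, h2⟩
      · exact absurd h2 (fun h2 => notBW q' hqB h2)
      · exact h1
    have hrW : r' ∈ sub.W := by
      rcases sub.adj_colors a2 with ⟨h1, h2⟩ | ⟨h1, h2⟩
      · exact h2
      · exact absurd h1 (fun h1 => notBW q' hqB h1)
    obtain ⟨c, hc⟩ : q' ∈ Set.range ι := hsub.black_image ▸ hqB
    obtain ⟨x1, x2, hx12, hxp1, hxp2, hgp⟩ := extFun_white hsub f hpW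
    obtain ⟨y1, y2, hy12, hyp1, hyp2, hgr⟩ := extFun_white hsub f hrW
    have hc_mem : c = x1 ∨ c = x2 := by
      by_contra hcon
      push_neg at hcon
      have hA1 : A.T.Adj x1 c := (hsub.adj_iff x1 c).mpr ⟨p', hpW, hxp1, by rw [hc]; exact a1⟩
      have hA2 : A.T.Adj c x2 := (hsub.adj_iff c x2).mpr
        ⟨p', hpW, by rw [hc]; exact a1.symm, hxp2⟩
      exact aux_no_triangle A.tree hA1 hA2 hx12
    have hc_mem' : c = y1 ∨ c = y2 := by
      by_contra hcon
      push_neg at hcon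
      have hA1 : A.T.Adj y1 c := (hsub.adj_iff y1 c).mpr
        ⟨r', hrW, hyp1, by rw [hc]; exact a2.symm⟩
      have hA2 : A.T.Adj c y2 := (hsub.adj_iff c y2).mpr ⟨r', hrW, by rw [hc]; exact a2, hyp2⟩
      exact aux_no_triangle A.tree hA1 hA2 hy12
    obtain ⟨x, hcx, hpx, hgp'⟩ : ∃ x, A.T.Adj c x ∧ sub.T.Adj p' (ι x) ∧
        extFun ι A sub f p' = (f c + f x) / 2 := by
      rcases hc_mem with h | h
      · refine ⟨x2, h ▸ hx12, hxp2, ?_⟩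
        rw [hgp, h]
      · refine ⟨x1, h ▸ hx12.symm, hxp1.symm, ?_⟩
        rw [hgp, h]
        ring
    obtain ⟨y, hcy, hry, hgr'⟩ : ∃ y, A.T.Adj c y ∧ sub.T.Adj r' (ι y) ∧
        extFun ι A sub f r' = (f c + f y) / 2 := by
      rcases hc_mem' with h | h
      · refine ⟨y2, h ▸ hy12, hyp2, ?_⟩
        rw [hgr, h]
      · refine ⟨y1, h ▸ hy12.symm, hyp1.symm, ?_⟩
        rw [hgr, h]
        ring
    have hxy : x ≠ y := by
      intro hxyeq
      refine aux_no_two_mid sub.tree hpr_ne (fun h => hcx.ne (hsub.inj h)) ?_ hpx ?_ ?_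
      · rw [hc]; exact a1.symm
      · rw [hc]; exact a2
      · rw [hxyeq]; exact hry
    have hd2 : A.T.dist x y = 2 := by
      have hle : A.T.dist x y ≤ (Walk.cons hcx.symm (Walk.cons hcy Walk.nil)).length :=
        SimpleGraph.dist_le _
      simp only [Walk.length_cons, Walk.length_nil] at hle
      have h0 : A.T.dist x y ≠ 0 := fun h0 =>
        hxy (A.tree.isConnected.dist_eq_zero_iff.mp h0)
      have h1' : A.T.dist x y ≠ 1 := fun h1 =>
        aux_no_triangle A.tree (SimpleGraph.dist_eq_one_iff_adj.mp h1) hcy.symm hcx.symm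
      omega
    have hdxc : A.T.dist x c = 1 := SimpleGraph.dist_eq_one_iff_adj.mpr hcx.symm
    have hdcy : A.T.dist c y = 1 := SimpleGraph.dist_eq_one_iff_adj.mpr hcy
    have hkey : 2 * f c ≤ f x + f y := by
      refine hf x y x c y 0 (by omega) ⟨?_, SimpleGraph.dist_self⟩ ⟨by omega, hdxc⟩
        ⟨?_, hd2⟩
      · rw [SimpleGraph.dist_self]
        omega
      · rw [SimpleGraph.dist_self]
        omega
    have hgq : extFun ι A sub f q' = f c := by
      rw [← hc]
      exact extFun_black A sub hsub.inj f c
    rw [hgq, hgp', hgr']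
    linarith
  · -- q' is white
    have hpB : p' ∈ sub.B := by
      rcases sub.adj_colors a1 with ⟨h1, h2⟩ | ⟨h1, h2⟩
      · exact h1
      · exact absurd h1 (fun h1 => notBW q' h2 hqW)
    have hrB : r' ∈ sub.B := by
      rcases sub.adj_colors a2 with ⟨h1, h2⟩ | ⟨h1, h2⟩
      · exact absurd h2 (fun h2' => notBW q' h1 hqW)
      · exact h2
    obtain ⟨a, ha⟩ : p' ∈ Set.range ι := hsub.black_image ▸ hpB
    obtain ⟨b, hb⟩ : r' ∈ Set.range ι := hsub.black_image ▸ hrB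
    obtain ⟨u0, v0, huv, hq'1, hq'2, hgq⟩ := extFun_white hsub f hqW
    have haMem : a = u0 ∨ a = v0 := by
      by_contra hcon
      push_neg at hcon
      have hA1 : A.T.Adj u0 a := (hsub.adj_iff u0 a).mpr
        ⟨q', hqW, hq'1, by rw [ha]; exact a1.symm⟩
      have hA2 : A.T.Adj a v0 := (hsub.adj_iff a v0).mpr
        ⟨q', hqW, by rw [ha]; exact a1, hq'2⟩
      exact aux_no_triangle A.tree hA1 hA2 huv
    have hbMem : b = u0 ∨ b = v0 := by
      by_contra hcon
      push_neg at hcon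
      have hA1 : A.T.Adj u0 b := (hsub.adj_iff u0 b).mpr
        ⟨q', hqW, hq'1, by rw [hb]; exact a2⟩
      have hA2 : A.T.Adj b v0 := (hsub.adj_iff b v0).mpr
        ⟨q', hqW, by rw [hb]; exact a2.symm, hq'2⟩
      exact aux_no_triangle A.tree hA1 hA2 huv
    have hab_ne : a ≠ b := fun h => hpr_ne (by rw [← ha, ← hb, h])
    have hsum : f a + f b = f u0 + f v0 := by
      rcases haMem with h1 | h1 <;> rcases hbMem with h2 | h2
      · exact absurd (h1.trans h2.symm) hab_ne
      · rw [h1, h2]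
      · rw [h1, h2]; ring
      · exact absurd (h1.trans h2.symm) hab_ne
    have hgp : extFun ι A sub f p' = f a := by
      rw [← ha]; exact extFun_black A sub hsub.inj f a
    have hgr : extFun ι A sub f r' = f b := by
      rw [← hb]; exact extFun_black A sub hsub.inj f b
    rw [hgq, hgp, hgr]
    linarith

end Aux3


/-- Lemma 2.13.  For a function on a tree `T`, convexity,
alternating L-convexity, and midpoint L-extendability are all equivalent; moreover
nonnegative combinations and pointwise maxima of convex functions on `T` are convex. -/
theorem stmt16 {V V' : Type*} (A : AltTree V)
    (sub : AltTree V') (ι : V → V') (hsub : IsSubdivision A.T sub ι) :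
    (∀ f : V → ℝ,
      (TreeConvex A.T f ↔ IsLConvex1 A f) ∧
      (TreeConvex A.T f ↔ ∃ g : V' → ℝ, IsLConvex1 sub g ∧ ∀ v, g (ι v) = f v)) ∧
    (∀ f g : V → ℝ, ∀ α β : ℝ, 0 ≤ α → 0 ≤ β →
      TreeConvex A.T f → TreeConvex A.T g →
      TreeConvex A.T (fun u => α * f u + β * g u) ∧
      TreeConvex A.T (fun u => max (f u) (g u))) := by
  constructor
  · intro f
    refine ⟨aux_conv_iff_lconv A f, ?_⟩
    constructor
    · intro hf
      refine ⟨extFun ι A sub f, ?_, fun v => extFun_black A sub hsub.inj f v⟩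
      rw [← aux_conv_iff_lconv sub]
      exact aux_ext_convex A sub ι hsub f hf
    · rintro ⟨g, hg, hgf⟩
      exact aux_restrict_convex A sub ι hsub f g hg hgf
  · intro f g α β hα hβ hf hg
    constructor
    · intro u v p q r t ht hp hq hr
      have h1 := hf u v p q r t ht hp hq hr
      have h2 := hg u v p q r t ht hp hq hr
      have h3 := mul_le_mul_of_nonneg_left h1 hα
      have h4 := mul_le_mul_of_nonneg_left h2 hβ
      dsimp only
      nlinarith
    · intro u v p q r t ht hp hq hr
      have h1 := hf u v p q r t ht hp hq hr
      have h2 := hg u v p q r t ht hp hq hr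
      dsimp only
      rcases le_total (f q) (g q) with h | h
      · rw [max_eq_right h]
        have e1 := le_max_right (f p) (g p)
        have e2 := le_max_right (f r) (g r)
        linarith
      · rw [max_eq_left h]
        have e1 := le_max_left (f p) (g p)
        have e2 := le_max_left (f r) (g r)
        linarith
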